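/- arXiv:1208.1229 — 2 statements merged into one kernel-verified Lean document; each statement's English description precedes it below -/
import Mathlib

section
/- For the Kummer surface quartic K = r·(x₀₀⁴+x₀₁⁴+x₁₀⁴+x₁₁⁴) + t·x₀₀x₀₁x₁₀x₁₁ + s₀₁·(x₀₀²x₀₁²+x₁₀²x₁₁²) + s₁₀·(x₀₀²x₁₀²+x₀₁²x₁₁²) + s₁₁·(x₀₀²x₁₁²+x₀₁²x₁₀²), when the coefficients r, s₀₁, s₁₀, s₁₁, t are defined as the signed 4×4 minors obtained by deleting the first row of the 5×5 matrix whose first row is (x₀₀⁴+x₀₁⁴+x₁₀⁴+x₁₁⁴, x₀₀²x₀₁²+x₁₀²x₁₁², x₀₀²x₁₀²+x₀₁²x₁₁², x₀₀²x₁₁²+x₀₁²x₁₀², x₀₀x₀₁x₁₀x₁₁) and whose remaining four rows are the partial derivatives of this row with respect to u₀₀, u₀₁, u₁₀, u₁₁ evaluated with x replaced by u, these coefficients satisfy the Segre cubic relation 16r³ + rt² + 4(s₀₁s₁₀s₁₁ − r s₀₁² − r s₁₀² − r s₁₁²) = 0 identically as a polynomial in u₀₀, u₀₁, u₁₀, u₁₁.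 -/
open MvPolynomial

namespace KummerSegre

/-- The variables `u₀₀, u₀₁, u₁₀, u₁₁`. -/
noncomputable abbrev u (i : Fin 4) : MvPolynomial (Fin 4) ℚ := X i

/-- The `4×5` matrix whose rows are the partial derivatives (with `x` replaced by `u`) of the
row `(x₀₀⁴+x₀₁⁴+x₁₀⁴+x₁₁⁴, x₀₀²x₀₁²+x₁₀²x₁₁², x₀₀²x₁₀²+x₀₁²x₁₁², x₀₀²x₁₁²+x₀₁²x₁₀², x₀₀x₀₁x₁₀x₁₁)`
with respect to `u₀₀, u₀₁, u₁₀, u₁₁`. -/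
noncomputable def M : Matrix (Fin 4) (Fin 5) (MvPolynomial (Fin 4) ℚ) :=
  !![4*u 0^3, 2*u 0*u 1^2, 2*u 0*u 2^2, 2*u 0*u 3^2, u 1*u 2*u 3;
     4*u 1^3, 2*u 0^2*u 1, 2*u 1*u 3^2, 2*u 1*u 2^2, u 0*u 2*u 3;
     4*u 2^3, 2*u 2*u 3^2, 2*u 0^2*u 2, 2*u 1^2*u 2, u 0*u 1*u 3;
     4*u 3^3, 2*u 2^2*u 3, 2*u 1^2*u 3, 2*u 0^2*u 3, u 0*u 1*u 2]

/-- The signed `4×4` minor of `M` obtained by deleting column `j`, with alternating signs,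
so that expanding the `5×5` determinant along its first row gives the Kummer quartic. -/
noncomputable def minor (j : Fin 5) : MvPolynomial (Fin 4) ℚ :=
  (-1 : MvPolynomial (Fin 4) ℚ) ^ (j : ℕ) * (M.submatrix id j.succAbove).det

/-! Writing `a, b, c, d` for the squares `u₀₀², u₀₁², u₁₀², u₁₁²`, the minors factor as
`r = 16XYZ`, `s₀₁ = 16YZα`, `s₁₀ = 16XZβ`, `s₁₁ = 16XYγ` and `t = 32 u₀₀u₀₁u₁₀u₁₁ H`, where
`X = ab - cd`, `Y = ac - bd`, `Z = ad - bc`, `α = c² + d² - a² - b²`, `β = b² + d² - a² - c²`,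
`γ = b² + c² - a² - d²` and `H = (a+b+c+d)(a+b-c-d)(a-b+c-d)(a-b-c+d)`. The cubic relation then equals `2¹⁴ XYZ` times
`u₀₀²u₀₁²u₁₀²u₁₁² H² - (XYZ)² (A² + B² + C² - ABC - 4)` with `A = α/X, B = β/Y, C = γ/Z`,
which vanishes by an identity of Fricke type. -/

theorem fricke_identity {R : Type*} [CommRing R] (a b c d : R) :
    a * b * c * d * ((a + b + c + d) * (a + b - c - d) * (a - b + c - d) * (a - b - c + d)) ^ 2 =
      ((a * c - b * d) * (a * d - b * c) * (c ^ 2 + d ^ 2 - a ^ 2 - b ^ 2)) ^ 2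
        + ((a * b - c * d) * (a * d - b * c) * (b ^ 2 + d ^ 2 - a ^ 2 - c ^ 2)) ^ 2
        + ((a * b - c * d) * (a * c - b * d) * (b ^ 2 + c ^ 2 - a ^ 2 - d ^ 2)) ^ 2
        - (a * b - c * d) * (a * c - b * d) * (a * d - b * c)
          * ((c ^ 2 + d ^ 2 - a ^ 2 - b ^ 2) * (b ^ 2 + d ^ 2 - a ^ 2 - c ^ 2)
            * (b ^ 2 + c ^ 2 - a ^ 2 - d ^ 2))
        - 4 * ((a * b - c * d) * (a * c - b * d) * (a * d - b * c)) ^ 2 := by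
  ring

theorem segre_cubic_of_factorization {R : Type*} [CommRing R]
    {a b c d p r s₀₁ s₁₀ s₁₁ t : R} (hp : p ^ 2 = a * b * c * d)
    (hr : r = 16 * (a * b - c * d) * (a * c - b * d) * (a * d - b * c))
    (hs₀₁ : s₀₁ = 16 * (a * c - b * d) * (a * d - b * c) * (c ^ 2 + d ^ 2 - a ^ 2 - b ^ 2))
    (hs₁₀ : s₁₀ = 16 * (a * b - c * d) * (a * d - b * c) * (b ^ 2 + d ^ 2 - a ^ 2 - c ^ 2))
    (hs₁₁ : s₁₁ = 16 * (a * b - c * d) * (a * c - b * d) * (b ^ 2 + c ^ 2 - a ^ 2 - d ^ 2))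
    (ht : t = 32 * p * ((a + b + c + d) * (a + b - c - d) * (a - b + c - d) * (a - b - c + d))) :
    16 * r ^ 3 + r * t ^ 2 + 4 * (s₀₁ * s₁₀ * s₁₁) -
      4 * r * s₀₁ ^ 2 - 4 * r * s₁₀ ^ 2 - 4 * r * s₁₁ ^ 2 = 0 := by
  subst hr hs₀₁ hs₁₀ hs₁₁ ht
  linear_combination
    (16384 * (a * b - c * d) * (a * c - b * d) * (a * d - b * c)) *
      (((a + b + c + d) * (a + b - c - d) * (a - b + c - d) * (a - b - c + d)) ^ 2 * hp
        + fricke_identity a b c d)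

theorem minor_zero : minor 0 =
    16 * (u 0 ^ 2 * u 1 ^ 2 - u 2 ^ 2 * u 3 ^ 2) * (u 0 ^ 2 * u 2 ^ 2 - u 1 ^ 2 * u 3 ^ 2) *
      (u 0 ^ 2 * u 3 ^ 2 - u 1 ^ 2 * u 2 ^ 2) := by
  simp [minor, M, Matrix.det_succ_row_zero, Fin.sum_univ_succ, Fin.succAbove]
  ring

theorem minor_one : minor 1 =
    16 * (u 0 ^ 2 * u 2 ^ 2 - u 1 ^ 2 * u 3 ^ 2) * (u 0 ^ 2 * u 3 ^ 2 - u 1 ^ 2 * u 2 ^ 2) *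
      (u 2 ^ 4 + u 3 ^ 4 - u 0 ^ 4 - u 1 ^ 4) := by
  simp [minor, M, Matrix.det_succ_row_zero, Fin.sum_univ_succ, Fin.succAbove]
  ring

theorem minor_two : minor 2 =
    16 * (u 0 ^ 2 * u 1 ^ 2 - u 2 ^ 2 * u 3 ^ 2) * (u 0 ^ 2 * u 3 ^ 2 - u 1 ^ 2 * u 2 ^ 2) *
      (u 1 ^ 4 + u 3 ^ 4 - u 0 ^ 4 - u 2 ^ 4) := by
  simp [minor, M, Matrix.det_succ_row_zero, Fin.sum_univ_succ, Fin.succAbove]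
  ring

theorem minor_three : minor 3 =
    16 * (u 0 ^ 2 * u 1 ^ 2 - u 2 ^ 2 * u 3 ^ 2) * (u 0 ^ 2 * u 2 ^ 2 - u 1 ^ 2 * u 3 ^ 2) *
      (u 1 ^ 4 + u 2 ^ 4 - u 0 ^ 4 - u 3 ^ 4) := by
  simp [minor, M, Matrix.det_succ_row_zero, Fin.sum_univ_succ, Fin.succAbove]
  ring

theorem minor_four : minor 4 =
    32 * (u 0 * u 1 * u 2 * u 3) *
      ((u 0 ^ 2 + u 1 ^ 2 + u 2 ^ 2 + u 3 ^ 2) * (u 0 ^ 2 + u 1 ^ 2 - u 2 ^ 2 - u 3 ^ 2) *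
        (u 0 ^ 2 - u 1 ^ 2 + u 2 ^ 2 - u 3 ^ 2) * (u 0 ^ 2 - u 1 ^ 2 - u 2 ^ 2 + u 3 ^ 2)) := by
  simp [minor, M, Matrix.det_succ_row_zero, Fin.sum_univ_succ, Fin.succAbove]
  ring

/-- The coefficients `r, s₀₁, s₁₀, s₁₁, t` of the Kummer surface quartic, as signed minors,
satisfy the Segre cubic relation `16r³ + rt² + 4(s₀₁s₁₀s₁₁ − r s₀₁² − r s₁₀² − r s₁₁²) = 0`
identically as polynomials in `u₀₀, u₀₁, u₁₀, u₁₁`. -/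
theorem segre_cubic_relation :
    16 * minor 0 ^ 3 + minor 0 * minor 4 ^ 2 + 4 * (minor 1 * minor 2 * minor 3) -
      4 * minor 0 * minor 1 ^ 2 - 4 * minor 0 * minor 2 ^ 2 - 4 * minor 0 * minor 3 ^ 2 = 0 := by
  refine segre_cubic_of_factorization (a := u 0 ^ 2) (b := u 1 ^ 2) (c := u 2 ^ 2) (d := u 3 ^ 2)
    (p := u 0 * u 1 * u 2 * u 3) (by ring) ?_ ?_ ?_ ?_ ?_
  · exact minor_zero
  · linear_combination minor_one
  · linear_combination minor_two
  · linear_combination minor_three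
  · linear_combination minor_four

end KummerSegre
end

section
/- The G"opel function identity: the bracket binomial g₇₁₂₃₄₅₆ = [127][347][567]·([134][156][235][246] − [135][146][234][256]), with brackets specialized to the minors of the matrix D with columns (1,d_i,d_i³), is divisible by ∏_{i<j}(d_i−d_j), and the quotient equals (d₁+d₂+d₇)(d₃+d₄+d₇)(d₅+d₆+d₇)(d₁−d₂)(d₃−d₄)(d₅−d₆)(−d₁−d₂−d₃−d₄−d₅−d₆), a product of seven linear forms. -/
/-!
Each bracket is `-(dᵢ - dⱼ)(dᵢ - dₖ)(dⱼ - dₖ)(dᵢ + dⱼ + dₖ)`, and expanding gives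
`Q₇ = ∏_{i<j≤6} (dᵢ - dⱼ) · (d₁ + ⋯ + d₆)`. The three brackets through `7` then contribute
exactly the missing differences `dᵢ - d₇`, together with `d₁ - d₂`, `d₃ - d₄`, `d₅ - d₆`,
the three sums through `d₇` and the sign `(-1)³`.
-/

open MvPolynomial

namespace GopelFunction

/-- The bracket `[ijk]`: the `3×3` minor on columns `i,j,k` of the matrix `D` whose columns
are `(1, dᵢ, dᵢ³)ᵗ`, where `d₁,…,d₇` are the variables `X 0, …, X 6`.  It equals
`(dᵢ−dⱼ)(dᵢ−dₖ)(dⱼ−dₖ)(dᵢ+dⱼ+dₖ)` up to sign. -/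
noncomputable def br (i j k : Fin 7) : MvPolynomial (Fin 7) ℚ :=
  Matrix.det !![(1 : MvPolynomial (Fin 7) ℚ), 1, 1; X i, X j, X k; X i ^ 3, X j ^ 3, X k ^ 3]

/-- The conic condition `Q₇ = [134][156][235][246] − [135][146][234][256]`. -/
noncomputable def Q7 : MvPolynomial (Fin 7) ℚ :=
  br 0 2 3 * br 0 4 5 * br 1 2 4 * br 1 3 5 - br 0 2 4 * br 0 3 5 * br 1 2 3 * br 1 4 5

/-- The Göpel function `g₇₁₂₃₄₅₆ = [127][347][567]·Q₇`. -/
noncomputable def g7123456 : MvPolynomial (Fin 7) ℚ :=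
  br 0 1 6 * br 2 3 6 * br 4 5 6 * Q7

theorem det_cubic_vandermonde {R : Type*} [CommRing R] (a b c : R) :
    !![1, 1, 1; a, b, c; a ^ 3, b ^ 3, c ^ 3].det =
      -((a - b) * (a - c) * (b - c) * (a + b + c)) := by
  simp only [Matrix.det_fin_three, Matrix.of_apply, Matrix.cons_val', Matrix.cons_val_zero,
    Matrix.cons_val_one, Matrix.cons_val, Matrix.cons_val_fin_one]
  ring

theorem br_eq (i j k : Fin 7) :
    br i j k = -((X i - X j) * (X i - X k) * (X j - X k) * (X i + X j + X k)) :=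
  det_cubic_vandermonde _ _ _

section PairProducts

variable {M : Type*} [CommMonoid M] {n : ℕ}

theorem prod_filter_lt_eq_prod_ite (f : Fin n × Fin n → M) :
    ∏ p ∈ Finset.univ.filter (fun p : Fin n × Fin n => p.1 < p.2), f p =
      ∏ i, ∏ j, if i < j then f (i, j) else 1 := by
  rw [Finset.prod_filter, Fintype.prod_prod_type]

theorem prod_filter_lt_succ (f : Fin (n + 1) → Fin (n + 1) → M) :
    ∏ p ∈ Finset.univ.filter (fun p : Fin (n + 1) × Fin (n + 1) => p.1 < p.2), f p.1 p.2 =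
      (∏ p ∈ Finset.univ.filter (fun p : Fin n × Fin n => p.1 < p.2),
        f p.1.castSucc p.2.castSucc) * ∏ i : Fin n, f i.castSucc (Fin.last n) := by
  simp only [prod_filter_lt_eq_prod_ite, Fin.prod_univ_castSucc, Fin.castSucc_lt_castSucc_iff,
    Fin.castSucc_lt_last, lt_irrefl, not_lt.2 (Fin.le_last _), if_true, if_false,
    Finset.prod_const_one, mul_one, Finset.prod_mul_distrib]

end PairProducts

theorem Q7_eq_prod_mul_sum : Q7 =
    (∏ p ∈ Finset.univ.filter (fun p : Fin 6 × Fin 6 => p.1 < p.2),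
      (X p.1.castSucc - X p.2.castSucc)) * (X 0 + X 1 + X 2 + X 3 + X 4 + X 5) := by
  simp only [Q7, br_eq, prod_filter_lt_eq_prod_ite, Fin.prod_univ_six, Fin.reduceLT,
    Fin.reduceCastSucc, ↓reduceIte]
  ring

theorem br016_mul_br236_mul_br456 : br 0 1 6 * br 2 3 6 * br 4 5 6 =
    -((∏ i : Fin 6, (X i.castSucc - X (Fin.last 6))) * (X 0 - X 1) * (X 2 - X 3) * (X 4 - X 5) *
      ((X 0 + X 1 + X 6) * (X 2 + X 3 + X 6) * (X 4 + X 5 + X 6))) := by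
  simp only [br_eq, Fin.prod_univ_six, Fin.reduceCastSucc, Fin.reduceLast]
  ring

/-- The Göpel function `g₇₁₂₃₄₅₆` is divisible by `∏_{i<j}(dᵢ−dⱼ)`, with quotient the
product of the seven linear forms
`(d₁+d₂+d₇)(d₃+d₄+d₇)(d₅+d₆+d₇)(d₁−d₂)(d₃−d₄)(d₅−d₆)(−d₁−d₂−d₃−d₄−d₅−d₆)`. -/
theorem g7123456_factorization :
    g7123456 =
      (∏ p ∈ Finset.univ.filter (fun p : Fin 7 × Fin 7 => p.1 < p.2), (X p.1 - X p.2)) *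
        ((X 0 + X 1 + X 6) * (X 2 + X 3 + X 6) * (X 4 + X 5 + X 6) *
         (X 0 - X 1) * (X 2 - X 3) * (X 4 - X 5) *
         (-(X 0 + X 1 + X 2 + X 3 + X 4 + X 5))) := by
  rw [g7123456, br016_mul_br236_mul_br456, Q7_eq_prod_mul_sum,
    prod_filter_lt_succ (fun i j : Fin 7 => (X i - X j : MvPolynomial (Fin 7) ℚ))]
  ring

end GopelFunction
end
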